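/- Let 𝔪 = {f ∈ 𝕋[x_1,…,x_n] : f is not a constant polynomial C c with tangible c ∈ ℝ}. Then 𝔪 is an ideal of the semiring 𝕋[x_1,…,x_n], 𝔪 is proper, and every proper ideal of 𝕋[x_1,…,x_n] is contained in 𝔪; hence 𝕋[x_1,…,x_n] has a unique maximal proper ideal, namely 𝔪. -/

import Mathlib

/-- The extended tropical semiring `𝕋`: tangible reals `(a, false)`,
ghost reals `(a, true)`, and `none` = `-∞`. -/
def T : Type := Option (ℝ × Bool)

namespace T

/-- The tangible element of value `a`. -/
def tang (a : ℝ) : T := some (a, false)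

/-- The ghost element `a^ν` of value `a`. -/
def ghost (a : ℝ) : T := some (a, true)

/-- Tropical addition on `𝕋`. -/
noncomputable def add : T → T → T
  | none, y => y
  | some p, none => some p
  | some (a, s), some (b, t) =>
      if a < b then some (b, t) else if b < a then some (a, s) else some (a, true)

/-- Tropical multiplication on `𝕋`. -/
noncomputable def mul : T → T → T
  | none, _ => none
  | some _, none => none
  | some (a, s), some (b, t) => some (a + b, s || t)

lemma add_assoc' : ∀ x y z : T, add (add x y) z = add x (add y z) := by
  rintro (_ | ⟨a, s⟩) (_ | ⟨b, t⟩) (_ | ⟨c, u⟩) <;>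
    simp only [add] <;>
    (try split_ifs) <;>
    grind [add]

lemma add_comm' : ∀ x y : T, add x y = add y x := by
  rintro (_ | ⟨a, s⟩) (_ | ⟨b, t⟩) <;>
    simp only [add] <;>
    (try split_ifs) <;>
    grind

lemma mul_assoc' : ∀ x y z : T, mul (mul x y) z = mul x (mul y z) := by
  rintro (_ | ⟨a, s⟩) (_ | ⟨b, t⟩) (_ | ⟨c, u⟩) <;>
    simp [mul, add_assoc, Bool.or_assoc] <;> rfl

lemma mul_comm' : ∀ x y : T, mul x y = mul y x := by
  rintro (_ | ⟨a, s⟩) (_ | ⟨b, t⟩) <;> simp [mul, add_comm, Bool.or_comm] <;> rfl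

lemma left_distrib' : ∀ x y z : T, mul x (add y z) = add (mul x y) (mul x z) := by
  rintro (_ | ⟨a, s⟩) (_ | ⟨b, t⟩) (_ | ⟨c, u⟩) <;>
    simp only [add, mul] <;>
    (try split_ifs) <;>
    grind [add, mul]

noncomputable instance : Zero T := ⟨none⟩
noncomputable instance : One T := ⟨some (0, false)⟩
noncomputable instance : Add T := ⟨add⟩
noncomputable instance : Mul T := ⟨mul⟩

noncomputable instance : CommSemiring T where
  add := (· + ·)
  zero := 0
  add_assoc := add_assoc'
  zero_add := fun x => by cases x <;> rfl
  add_zero := fun x => by cases x <;> rfl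
  add_comm := add_comm'
  mul := (· * ·)
  one := 1
  mul_assoc := mul_assoc'
  one_mul := fun x => by
    show mul (some (0, false)) x = x
    rcases x with _ | ⟨a, s⟩ <;> simp [mul] <;> rfl
  mul_one := fun x => by
    show mul x (some (0, false)) = x
    rcases x with _ | ⟨a, s⟩ <;> simp [mul] <;> rfl
  mul_comm := mul_comm'
  zero_mul := fun x => by cases x <;> rfl
  mul_zero := fun x => by cases x <;> rfl
  left_distrib := left_distrib'
  right_distrib := fun x y z => by
    show mul (add x y) z = add (mul x z) (mul y z)
    rw [mul_comm', left_distrib', mul_comm' z x, mul_comm' z y]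
  nsmul := nsmulRec

/-- Membership in the ghost part `𝕌̄ = 𝕌 ∪ {-∞}` of `𝕋`. -/
def isGhost : T → Prop
  | none => True
  | some (_, s) => s = true

/-- Membership in the tangible part `ℝ ∪ {-∞}` of `𝕋`. -/
def isTangible : T → Prop
  | none => True
  | some (_, s) => s = false

/-- The underlying real value (junk value `0` at `-∞`); this is `π` on elements `≠ -∞`. -/
def val : T → ℝ
  | none => 0
  | some (a, _) => a

/-- The ghost map `ν`. -/
def nu : T → T
  | none => none
  | some (a, _) => some (a, true)

end T

namespace T

/-- The model value in the half line `[0,∞)`: `-∞ ↦ 0`, an element of value `a ↦ exp a`. -/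
noncomputable def gval : T → ℝ
  | none => 0
  | some (a, _) => Real.exp a

lemma nu_isGhost : ∀ x : T, isGhost (nu x)
  | none => trivial
  | some (_, _) => rfl

lemma gval_injOn_tang : Set.InjOn gval {x : T | isTangible x} := by
  rintro (_ | ⟨a, s⟩) hx (_ | ⟨b, t⟩) hy h <;>
    simp only [gval, Set.mem_setOf_eq, isTangible] at hx hy h
  · rfl
  · exact absurd h.symm (Real.exp_pos b).ne'
  · exact absurd h (Real.exp_pos a).ne'
  · rw [Real.exp_eq_exp] at h; subst hx; subst hy; subst h; rfl

lemma gval_injOn_ghost : Set.InjOn gval {x : T | isGhost x} := by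
  rintro (_ | ⟨a, s⟩) hx (_ | ⟨b, t⟩) hy h <;>
    simp only [gval, Set.mem_setOf_eq, isGhost] at hx hy h
  · rfl
  · exact absurd h.symm (Real.exp_pos b).ne'
  · exact absurd h (Real.exp_pos a).ne'
  · rw [Real.exp_eq_exp] at h; subst hx; subst hy; subst h; rfl

lemma gval_image_tang : gval '' {x : T | isTangible x} = Set.Ici 0 := by
  ext y
  constructor
  · rintro ⟨(_ | ⟨a, s⟩), hx, rfl⟩
    · exact Set.self_mem_Ici
    · exact le_of_lt (by simpa [gval] using Real.exp_pos a)
  · intro hy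
    rcases eq_or_lt_of_le (Set.mem_Ici.mp hy : (0 : ℝ) ≤ y) with h | h
    · exact ⟨none, trivial, h⟩
    · exact ⟨some (Real.log y, false), rfl, by simp [gval, Real.exp_log h]⟩

lemma gval_image_ghost : gval '' {x : T | isGhost x} = Set.Ici 0 := by
  ext y
  constructor
  · rintro ⟨(_ | ⟨a, s⟩), hx, rfl⟩
    · exact Set.self_mem_Ici
    · exact le_of_lt (by simpa [gval] using Real.exp_pos a)
  · intro hy
    rcases eq_or_lt_of_le (Set.mem_Ici.mp hy : (0 : ℝ) ≤ y) with h | h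
    · exact ⟨none, trivial, h⟩
    · exact ⟨some (Real.log y, true), rfl, by simp [gval, Real.exp_log h]⟩

/-- The closed sets of the topology on `𝕋`: both the tangible and the ghost layers are
closed in the model `[0,∞)` of `𝕌̄`, and the ghost image of the tangible layer is
contained in the set. -/
def TIsClosed (W : Set T) : Prop :=
  IsClosed (gval '' (W ∩ {x | isTangible x})) ∧
  IsClosed (gval '' (W ∩ {x | isGhost x})) ∧
  nu '' (W ∩ {x | isTangible x}) ⊆ W ∩ {x | isGhost x}

/-- The topology on `𝕋`. -/
noncomputable instance : TopologicalSpace T :=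
  TopologicalSpace.ofClosed {W | TIsClosed W}
    (by
      refine ⟨?_, ?_, ?_⟩ <;> simp [TIsClosed])
    (fun A hA => by
      rcases A.eq_empty_or_nonempty with rfl | hne
      · rw [Set.sInter_empty]
        refine ⟨?_, ?_, ?_⟩
        · rw [Set.univ_inter, gval_image_tang]; exact isClosed_Ici
        · rw [Set.univ_inter, gval_image_ghost]; exact isClosed_Ici
        · rintro y ⟨x, ⟨-, _⟩, rfl⟩
          exact ⟨trivial, nu_isGhost x⟩
      · have : Nonempty A := hne.to_subtype
        have h1 : (⋂₀ A) ∩ {x : T | isTangible x}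
            = ⋂ (W : A), ((W : Set T) ∩ {x | isTangible x}) := by
          ext x
          simp only [Set.mem_inter_iff, Set.mem_sInter, Set.mem_iInter, Set.mem_setOf_eq]
          constructor
          · rintro ⟨h, ht⟩ W; exact ⟨h W W.2, ht⟩
          · intro h
            obtain ⟨W, hW⟩ := hne
            exact ⟨fun V hV => (h ⟨V, hV⟩).1, (h ⟨W, hW⟩).2⟩
        have h2 : (⋂₀ A) ∩ {x : T | isGhost x}
            = ⋂ (W : A), ((W : Set T) ∩ {x | isGhost x}) := by
          ext x
          simp only [Set.mem_inter_iff, Set.mem_sInter, Set.mem_iInter, Set.mem_setOf_eq]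
          constructor
          · rintro ⟨h, ht⟩ W; exact ⟨h W W.2, ht⟩
          · intro h
            obtain ⟨W, hW⟩ := hne
            exact ⟨fun V hV => (h ⟨V, hV⟩).1, (h ⟨W, hW⟩).2⟩
        refine ⟨?_, ?_, ?_⟩
        · rw [h1, Set.InjOn.image_iInter_eq
            (gval_injOn_tang.mono (Set.iUnion_subset fun W => Set.inter_subset_right))]
          exact isClosed_iInter fun W => (hA W.2).1
        · rw [h2, Set.InjOn.image_iInter_eq
            (gval_injOn_ghost.mono (Set.iUnion_subset fun W => Set.inter_subset_right))]
          exact isClosed_iInter fun W => (hA W.2).2.1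
        · rintro y ⟨x, ⟨hx, hxt⟩, rfl⟩
          refine ⟨fun W hW => ((hA hW).2.2 ⟨x, ⟨hx W hW, hxt⟩, rfl⟩).1, nu_isGhost x⟩)
    (fun A hA B hB => by
      have h1 : (A ∪ B) ∩ {x : T | isTangible x}
          = (A ∩ {x | isTangible x}) ∪ (B ∩ {x | isTangible x}) :=
        Set.union_inter_distrib_right A B _
      have h2 : (A ∪ B) ∩ {x : T | isGhost x}
          = (A ∩ {x | isGhost x}) ∪ (B ∩ {x | isGhost x}) :=
        Set.union_inter_distrib_right A B _
      refine ⟨?_, ?_, ?_⟩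
      · rw [h1, Set.image_union]; exact hA.1.union hB.1
      · rw [h2, Set.image_union]; exact hA.2.1.union hB.2.1
      · rintro y ⟨x, ⟨hx, hxt⟩, rfl⟩
        rcases hx with hxA | hxB
        · have h := hA.2.2 ⟨x, ⟨hxA, hxt⟩, rfl⟩
          exact ⟨Or.inl h.1, h.2⟩
        · have h := hB.2.2 ⟨x, ⟨hxB, hxt⟩, rfl⟩
          exact ⟨Or.inr h.1, h.2⟩)

end T

/-!
The units of `𝕋` are exactly the tangible elements, and since `x ⊕ y` is always `x`, `y` or
`x^ν`, a sum can only be a unit if one of its summands is: `𝕋` is a local semiring.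
Moreover `𝕋` has no zero divisors and no nonzero element has an additive inverse, so no
cancellation happens when polynomials over `𝕋` are added or multiplied. Hence the units of
`𝕋[x_1,…,x_n]` are the constants `C u` with `u` a unit, and `𝕋[x_1,…,x_n]` is again local;
its maximal ideal is the set of non-units.
-/

namespace MvPolynomial

variable {σ R : Type*} [CommSemiring R]

lemma eq_C_of_forall_coeff_eq_zero {p : MvPolynomial σ R} (h : ∀ m ≠ 0, coeff m p = 0) :
    p = C (coeff 0 p) := by
  ext m
  classical
  rw [coeff_C]
  split_ifs with hm
  · rw [hm]
  · exact h m (Ne.symm hm)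

variable [Subsingleton (AddUnits R)]

lemma add_mem_support_mul [NoZeroDivisors R] {p q : MvPolynomial σ R} {a b : σ →₀ ℕ}
    (ha : a ∈ p.support) (hb : b ∈ q.support) : a + b ∈ (p * q).support := by
  classical
  rw [mem_support_iff, coeff_mul, Ne, Finset.sum_eq_zero_iff, not_forall]
  exact ⟨(a, b), by simpa using mul_ne_zero (mem_support_iff.1 ha) (mem_support_iff.1 hb)⟩

lemma eq_C_of_isUnit [NoZeroDivisors R] {p : MvPolynomial σ R} (hp : IsUnit p) :
    p = C (coeff 0 p) := by
  nontriviality R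
  obtain ⟨q, hpq⟩ := hp.exists_right_inv
  obtain ⟨b, hb⟩ : q.support.Nonempty := by
    rw [Finset.nonempty_iff_ne_empty, Ne, support_eq_empty]
    rintro rfl
    simp at hpq
  refine eq_C_of_forall_coeff_eq_zero fun a ha => ?_
  by_contra hpa
  have := add_mem_support_mul (mem_support_iff.2 hpa) hb
  rw [hpq, support_one, Finset.mem_singleton] at this
  exact ha (add_eq_zero.1 this).1

lemma isUnit_iff_eq_C [NoZeroDivisors R] {p : MvPolynomial σ R} :
    IsUnit p ↔ ∃ u : R, IsUnit u ∧ p = C u := by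
  refine ⟨fun hp => ⟨_, hp.map constantCoeff, eq_C_of_isUnit hp⟩, ?_⟩
  rintro ⟨u, hu, rfl⟩
  exact hu.map C

lemma eq_C_of_add_eq_C {p q : MvPolynomial σ R} {r : R} (h : p + q = C r) :
    p = C (coeff 0 p) :=
  eq_C_of_forall_coeff_eq_zero fun m hm => by
    classical
    have := congrArg (coeff m) h
    rw [coeff_add, coeff_C, if_neg (Ne.symm hm)] at this
    exact (add_eq_zero.1 this).1

instance [IsLocalRing R] [NoZeroDivisors R] : IsLocalRing (MvPolynomial σ R) where
  isUnit_or_isUnit_of_add_one {p q} h := by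
    rw [← C_1] at h
    have hp := eq_C_of_add_eq_C h
    have hq := eq_C_of_add_eq_C ((add_comm q p).trans h)
    have h0 : coeff 0 p + coeff 0 q = 1 := by
      simpa using congrArg (coeff 0) h
    rw [hp, hq]
    exact (IsLocalRing.isUnit_or_isUnit_of_add_one h0).imp (IsUnit.map C) (IsUnit.map C)

end MvPolynomial

namespace T

instance : Nontrivial T := ⟨⟨0, 1, nofun⟩⟩

lemma add_eq_or_eq_or_eq_nu : ∀ x y : T, x + y = x ∨ x + y = y ∨ x + y = nu x
  | none, _ => .inr (.inl rfl)
  | some _, none => .inl rfl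
  | some (a, s), some (b, t) => by
    change T.add _ _ = _ ∨ T.add _ _ = _ ∨ T.add _ _ = _
    unfold T.add
    by_cases hab : a < b
    · exact .inr (.inl (if_pos hab))
    by_cases hba : b < a
    · exact .inl ((if_neg hab).trans (if_pos hba))
    · obtain rfl : a = b := le_antisymm (not_lt.1 hba) (not_lt.1 hab)
      exact .inr (.inr ((if_neg hab).trans (if_neg hba)))

lemma eq_zero_of_nu_eq_zero : ∀ {x : T}, nu x = 0 → x = 0
  | none, _ => rfl

lemma nu_ne_tang : ∀ (x : T) (c : ℝ), nu x ≠ tang c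
  | none, _ => nofun
  | some _, _ => nofun

lemma eq_zero_of_add_eq_zero {x y : T} (h : x + y = 0) : x = 0 := by
  rcases add_eq_or_eq_or_eq_nu x y with hx | hy | hν
  · exact hx ▸ h
  · have hy0 : y = 0 := hy.symm.trans h
    rwa [hy0, add_zero] at h
  · exact eq_zero_of_nu_eq_zero (hν ▸ h)

instance : Subsingleton (AddUnits T) :=
  ⟨fun u v => AddUnits.ext <|
    (eq_zero_of_add_eq_zero u.val_neg).trans (eq_zero_of_add_eq_zero v.val_neg).symm⟩

instance : NoZeroDivisors T where
  eq_zero_or_eq_zero_of_mul_eq_zero {x y} h := by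
    rcases x with _ | ⟨a, s⟩ <;> rcases y with _ | ⟨b, t⟩
    all_goals first | exact .inl rfl | exact .inr rfl | exact absurd h nofun

lemma eq_tang_or_eq_tang_of_add_eq_tang {x y : T} {c : ℝ} (h : x + y = tang c) :
    x = tang c ∨ y = tang c := by
  rcases add_eq_or_eq_or_eq_nu x y with hx | hy | hν
  · exact .inl (hx ▸ h)
  · exact .inr (hy ▸ h)
  · exact absurd (hν ▸ h) (nu_ne_tang x c)

lemma isUnit_iff_exists_eq_tang {x : T} : IsUnit x ↔ ∃ c : ℝ, x = tang c := by
  rw [isUnit_iff_exists_inv]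
  constructor
  · rintro ⟨y, h⟩
    rcases x with _ | ⟨a, s⟩ <;> rcases y with _ | ⟨b, t⟩
    iterate 3 exact absurd h nofun
    change some (a + b, s || t) = some (0, false) at h
    simp only [Option.some.injEq, Prod.mk.injEq, Bool.or_eq_false_iff] at h
    exact ⟨a, by rw [h.2.1]; rfl⟩
  · rintro ⟨c, rfl⟩
    refine ⟨tang (-c), ?_⟩
    change some (c + -c, false || false) = some (0, false)
    simp

instance : IsLocalRing T where
  isUnit_or_isUnit_of_add_one h :=
    (eq_tang_or_eq_tang_of_add_eq_tang h).imp (fun h => isUnit_iff_exists_eq_tang.2 ⟨0, h⟩)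
      (fun h => isUnit_iff_exists_eq_tang.2 ⟨0, h⟩)

end T

/-- Corollary `thm:singleMaximalIdeal`: the set of polynomials that
are not tangible constants is the unique maximal proper ideal of `𝕋[x_1,…,x_n]`. -/
theorem tropical_unique_maximal_ideal (n : ℕ) :
    ∃ M : Ideal (MvPolynomial (Fin n) T),
      (M : Set (MvPolynomial (Fin n) T))
          = {f : MvPolynomial (Fin n) T | ¬ ∃ c : ℝ, f = MvPolynomial.C (T.tang c)} ∧
      M ≠ ⊤ ∧
      ∀ I : Ideal (MvPolynomial (Fin n) T), I ≠ ⊤ → I ≤ M := by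
  refine ⟨IsLocalRing.maximalIdeal _, ?_, (IsLocalRing.maximalIdeal.isMaximal _).ne_top,
    fun _ => IsLocalRing.le_maximalIdeal⟩
  ext f
  simp only [SetLike.mem_coe, IsLocalRing.mem_maximalIdeal, mem_nonunits_iff,
    MvPolynomial.isUnit_iff_eq_C, T.isUnit_iff_exists_eq_tang, Set.mem_ofPred_eq]
  grind
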